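/- arXiv:2604.09550 — 3 statements merged into one kernel-verified Lean document; each statement's English description precedes it below -/
import Mathlib

section
/- Let E be a real inner product space and define Λ(u,v) = cosh(‖u‖)·cosh(‖v‖) − sinhc(‖u‖)·sinhc(‖v‖)·⟨u,v⟩, where sinhc(r) = sinh(r)/r for r ≠ 0 and sinhc(0) = 1. Let κ(R) = sinh(R)/R. For every R > 0 and all u, v ∈ E with ‖u‖ ≤ R and ‖v‖ ≤ R, one has Λ(u,v) ≥ 1 and ‖u − v‖ ≤ arcosh(Λ(u,v)) ≤ κ(R)·‖u − v‖. -/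
/-- Inverse hyperbolic cosine: `arcosh z = log (z + √(z² − 1))` for `z ≥ 1`. -/
noncomputable def arcosh (z : ℝ) : ℝ := Real.log (z + Real.sqrt (z ^ 2 - 1))

/-- `sinhc r = sinh r / r` for `r ≠ 0`, and `sinhc 0 = 1`. -/
noncomputable def sinhc (r : ℝ) : ℝ := if r = 0 then 1 else Real.sinh r / r

/-- `Λ(u,v) = cosh ‖u‖ · cosh ‖v‖ − sinhc ‖u‖ · sinhc ‖v‖ · ⟨u,v⟩`,
which equals minus the Lorentzian inner product of the Lorentz exponential images. -/
noncomputable def lorentzLambda {E : Type*} [NormedAddCommGroup E] [InnerProductSpace ℝ E]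
    (u v : E) : ℝ :=
  Real.cosh ‖u‖ * Real.cosh ‖v‖ - sinhc ‖u‖ * sinhc ‖v‖ * (inner ℝ u v : ℝ)

lemma sinh_eq_mul_sinhc (x : ℝ) : Real.sinh x = x * sinhc x := by
  unfold sinhc; split_ifs with h
  · simp [h]
  · field_simp

lemma one_le_sinhc {x : ℝ} (hx : 0 ≤ x) : 1 ≤ sinhc x := by
  unfold sinhc; split_ifs with h
  · exact le_rfl
  · have hx' : 0 < x := lt_of_le_of_ne hx (Ne.symm h)
    rw [le_div_iff₀ hx']
    simpa using Real.self_le_sinh_iff.2 hx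

lemma sinhc_pos {x : ℝ} (hx : 0 ≤ x) : 0 < sinhc x :=
  lt_of_lt_of_le one_pos (one_le_sinhc hx)

lemma convexOn_sinh : ConvexOn ℝ (Set.Ici (0:ℝ)) Real.sinh := by
  apply convexOn_of_deriv2_nonneg (convex_Ici 0) Real.continuous_sinh.continuousOn
    Real.differentiable_sinh.differentiableOn
  · rw [Real.deriv_sinh]; exact Real.differentiable_cosh.differentiableOn
  · intro x hx
    simp only [Function.iterate_succ, Function.iterate_zero, Function.comp_apply, id,
      Real.deriv_sinh, Real.deriv_cosh]
    exact Real.sinh_nonneg_iff.2 (le_of_lt (by simpa using hx))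

lemma sinhc_mono {x y : ℝ} (hx : 0 ≤ x) (hxy : x ≤ y) : sinhc x ≤ sinhc y := by
  rcases eq_or_lt_of_le hx with h0 | h0
  · rw [← h0]
    simpa [sinhc] using one_le_sinhc (hx.trans hxy)
  have hy : 0 < y := lt_of_lt_of_le h0 hxy
  have hb : (0:ℝ) ≤ x / y := by positivity
  have ha : (0:ℝ) ≤ 1 - x / y := by
    have : x / y ≤ 1 := (div_le_one hy).2 hxy
    linarith
  have hab : (1 - x/y) + x/y = 1 := by ring
  have key := convexOn_sinh.2 (Set.mem_Ici.2 (le_refl (0:ℝ))) (Set.mem_Ici.2 hy.le) ha hb hab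
  simp only [smul_eq_mul, mul_zero, Real.sinh_zero, zero_add] at key
  -- key : Real.sinh ((1 - x/y) * 0 + (x/y) * y) ≤ (x/y) * Real.sinh y
  have hxval : x / y * y = x := div_mul_cancel₀ x hy.ne'
  rw [hxval] at key
  unfold sinhc
  rw [if_neg h0.ne', if_neg hy.ne', div_le_div_iff₀ h0 hy]
  calc Real.sinh x * y ≤ (x / y * Real.sinh y) * y := by nlinarith
    _ = Real.sinh y * x := by field_simp

lemma cosh_sub_cosh' (x y : ℝ) :
    Real.cosh x - Real.cosh y = 2 * Real.sinh ((x+y)/2) * Real.sinh ((x-y)/2) := by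
  have h1 := Real.cosh_add ((x+y)/2) ((x-y)/2)
  have h2 := Real.cosh_sub ((x+y)/2) ((x-y)/2)
  have e1 : (x+y)/2 + (x-y)/2 = x := by ring
  have e2 : (x+y)/2 - (x-y)/2 = y := by ring
  rw [e1] at h1; rw [e2] at h2; linarith

lemma arcosh_cosh {x : ℝ} (hx : 0 ≤ x) : arcosh (Real.cosh x) = x := by
  unfold arcosh
  have h1 : Real.cosh x ^ 2 - 1 = Real.sinh x ^ 2 := by
    have := Real.cosh_sq x; linarith
  rw [h1, Real.sqrt_sq (Real.sinh_nonneg_iff.2 hx), Real.cosh_add_sinh, Real.log_exp]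

lemma arcosh_le_arcosh {x y : ℝ} (hx : 1 ≤ x) (hxy : x ≤ y) : arcosh x ≤ arcosh y := by
  unfold arcosh
  have h1 : (0:ℝ) < x + Real.sqrt (x ^ 2 - 1) := by
    have := Real.sqrt_nonneg (x ^ 2 - 1); linarith
  apply Real.log_le_log h1
  have : Real.sqrt (x ^ 2 - 1) ≤ Real.sqrt (y ^ 2 - 1) := by
    apply Real.sqrt_le_sqrt; nlinarith
  linarith

set_option maxHeartbeats 1000000 in
/-- Theorem 1 (tangent-space distortion under radius `R`), Lorentz model:
for `‖u‖, ‖v‖ ≤ R`, one has `Λ(u,v) ≥ 1` and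
`‖u − v‖ ≤ arcosh (Λ(u,v)) ≤ (sinh R / R) · ‖u − v‖`. -/
theorem lorentz_tangent_distortion {E : Type*} [NormedAddCommGroup E]
    [InnerProductSpace ℝ E] (R : ℝ) (hR : 0 < R) (u v : E)
    (hu : ‖u‖ ≤ R) (hv : ‖v‖ ≤ R) :
    1 ≤ lorentzLambda u v ∧
      ‖u - v‖ ≤ arcosh (lorentzLambda u v) ∧
        arcosh (lorentzLambda u v) ≤ (Real.sinh R / R) * ‖u - v‖ := by
  set a : ℝ := ‖u‖ with ha_def
  set b : ℝ := ‖v‖ with hb_def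
  set d : ℝ := ‖u - v‖ with hd_def
  set w : ℝ := (inner ℝ u v : ℝ) with hw_def
  have ha : 0 ≤ a := norm_nonneg _
  have hb : 0 ≤ b := norm_nonneg _
  have hd : 0 ≤ d := norm_nonneg _
  have hd2 : d ^ 2 = a ^ 2 - 2 * w + b ^ 2 := norm_sub_sq_real u v
  have hpd : |a - b| ≤ d := abs_norm_sub_norm_le u v
  have hdab : d ≤ a + b := norm_sub_le u v
  have hw : w ≤ a * b := real_inner_le_norm u v
  set κ : ℝ := Real.sinh R / R with hκ_def
  have hκs : κ = sinhc R := by unfold sinhc; rw [if_neg hR.ne']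
  have hκ1 : 1 ≤ κ := hκs ▸ one_le_sinhc hR.le
  have hΛ : lorentzLambda u v = Real.cosh (a - b) + sinhc a * sinhc b * (a * b - w) := by
    unfold lorentzLambda
    rw [Real.cosh_sub, sinh_eq_mul_sinhc a, sinh_eq_mul_sinhc b]
    ring
  set p : ℝ := |a - b| with hp_def
  have hp0 : 0 ≤ p := abs_nonneg _
  have hcoshp : Real.cosh p = Real.cosh (a - b) := Real.cosh_abs _
  have hp2 : p ^ 2 = (a - b) ^ 2 := sq_abs _
  have habw : 0 ≤ a * b - w := by linarith
  -- lower bound: cosh d ≤ Λ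
  have keyA : Real.cosh d ≤ lorentzLambda u v := by
    set m : ℝ := (d + p) / 2 with hm_def
    set n : ℝ := (d - p) / 2 with hn_def
    have hm0 : 0 ≤ m := by simp only [hm_def]; positivity
    have hn0 : 0 ≤ n := by simp only [hn_def]; linarith
    have hmn : 2 * m * n = a * b - w := by
      have : 4 * (m * n) = d ^ 2 - p ^ 2 := by simp only [hm_def, hn_def]; ring
      nlinarith
    have hcc : Real.cosh d - Real.cosh p = 2 * Real.sinh m * Real.sinh n := by
      simpa only [hm_def, hn_def] using cosh_sub_cosh' d p
    have hsm : Real.sinh m = m * sinhc m := sinh_eq_mul_sinhc m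
    have hsn : Real.sinh n = n * sinhc n := sinh_eq_mul_sinhc n
    -- sinhc m * sinhc n ≤ sinhc a * sinhc b
    have hprod : sinhc m * sinhc n ≤ sinhc a * sinhc b := by
      rcases le_total a b with hab | hab
      · have hma : m ≤ b := by
          simp only [hm_def]
          rw [div_le_iff₀ (by norm_num : (0:ℝ) < 2)]
          have : p = b - a := by rw [hp_def, abs_of_nonpos (by linarith)]; ring
          linarith
        have hnb : n ≤ a := by
          simp only [hn_def]
          rw [div_le_iff₀ (by norm_num : (0:ℝ) < 2)]
          have : p = b - a := by rw [hp_def, abs_of_nonpos (by linarith)]; ring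
          linarith
        have h1 := sinhc_mono hm0 hma
        have h2 := sinhc_mono hn0 hnb
        have := sinhc_pos hm0; have := sinhc_pos hn0
        have := sinhc_pos ha; have := sinhc_pos hb
        nlinarith
      · have hma : m ≤ a := by
          simp only [hm_def]
          rw [div_le_iff₀ (by norm_num : (0:ℝ) < 2)]
          have : p = a - b := by rw [hp_def, abs_of_nonneg (by linarith)]
          linarith
        have hnb : n ≤ b := by
          simp only [hn_def]
          rw [div_le_iff₀ (by norm_num : (0:ℝ) < 2)]
          have : p = a - b := by rw [hp_def, abs_of_nonneg (by linarith)]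
          linarith
        have h1 := sinhc_mono hm0 hma
        have h2 := sinhc_mono hn0 hnb
        have := sinhc_pos hm0; have := sinhc_pos hn0
        have := sinhc_pos ha; have := sinhc_pos hb
        nlinarith
    have hcalc : Real.cosh d = Real.cosh p + (a * b - w) * (sinhc m * sinhc n) := by
      rw [← hmn]; rw [hsm, hsn] at hcc; linarith [hcc]
    rw [hΛ, ← hcoshp, hcalc]
    have hmn0 : 0 ≤ sinhc m * sinhc n := le_of_lt (mul_pos (sinhc_pos hm0) (sinhc_pos hn0))
    nlinarith
  -- upper bound: Λ ≤ cosh (κ * d)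
  have keyB : lorentzLambda u v ≤ Real.cosh (κ * d) := by
    have hsa : sinhc a ≤ κ := hκs ▸ sinhc_mono ha hu
    have hsb : sinhc b ≤ κ := hκs ▸ sinhc_mono hb hv
    have h1 : sinhc a * sinhc b * (a * b - w) ≤ κ ^ 2 * (a * b - w) := by
      have hpa := sinhc_pos ha; have hpb := sinhc_pos hb
      have hpp : sinhc a * sinhc b ≤ κ * κ :=
        mul_le_mul hsa hsb hpb.le (le_trans hpa.le hsa)
      nlinarith [mul_le_mul_of_nonneg_right hpp habw]
    have h2 : Real.cosh (a - b) ≤ Real.cosh (κ * p) := by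
      rw [← hcoshp]
      rw [Real.cosh_le_cosh]
      rw [abs_of_nonneg hp0, abs_of_nonneg (by positivity : (0:ℝ) ≤ κ * p)]
      nlinarith
    have h3 : Real.cosh (κ * p) + κ ^ 2 * (a * b - w) ≤ Real.cosh (κ * d) := by
      set M : ℝ := (κ * d + κ * p) / 2 with hM_def
      set N : ℝ := (κ * d - κ * p) / 2 with hN_def
      have hM0 : 0 ≤ M := by simp only [hM_def]; positivity
      have hN0 : 0 ≤ N := by
        simp only [hN_def]
        have : κ * p ≤ κ * d := mul_le_mul_of_nonneg_left hpd (by positivity)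
        linarith
      have hcc : Real.cosh (κ * d) - Real.cosh (κ * p) = 2 * Real.sinh M * Real.sinh N := by
        simpa only [hM_def, hN_def] using cosh_sub_cosh' (κ * d) (κ * p)
      have hsM : M ≤ Real.sinh M := Real.self_le_sinh_iff.2 hM0
      have hsN : N ≤ Real.sinh N := Real.self_le_sinh_iff.2 hN0
      have hMN : 2 * M * N = κ ^ 2 * (a * b - w) := by
        have h4 : 4 * (M * N) = κ ^ 2 * (d ^ 2 - p ^ 2) := by
          simp only [hM_def, hN_def]; ring
        linear_combination h4 / 2 + (κ ^ 2 / 2) * hd2 - (κ ^ 2 / 2) * hp2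
      have hprodMN : M * N ≤ Real.sinh M * Real.sinh N :=
        mul_le_mul hsM hsN hN0 (Real.sinh_nonneg_iff.2 hM0)
      linarith
    rw [hΛ]; linarith
  have h1leΛ : 1 ≤ lorentzLambda u v := le_trans (Real.one_le_cosh d) keyA
  refine ⟨h1leΛ, ?_, ?_⟩
  · have := arcosh_le_arcosh (Real.one_le_cosh d) keyA
    rwa [arcosh_cosh hd] at this
  · have hκd : 0 ≤ κ * d := by positivity
    have := arcosh_le_arcosh h1leΛ keyB
    rwa [arcosh_cosh hκd] at this
end

section
/- Let V be a finite type, κ ≥ 1 a real number, and f, g : V → ℝ functions with 0 ≤ g(v) and g(v) ≤ f(v) ≤ κ·g(v) for all v ∈ V. Let S be a nonempty finite subset of V and let d_k = max_{s ∈ S} f(s). If every v ∉ S satisfies f(v) > κ·d_k, then for every s ∈ S and every v ∉ S one has g(s) < g(v); consequently S is exactly the set of |S| elements of V with the smallest g-values. -/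
/-- Proposition 1 (rank stability under a multiplicative gap).
`f` is the hyperbolic distance to the query, `g` the tangent-space Euclidean distance,
with `0 ≤ g ≤ f ≤ κ·g`. `S` is the hyperbolic top-k set with `d_k = max_{s ∈ S} f s`.
If every `v ∉ S` satisfies `f v > κ · d_k`, then every `s ∈ S` has strictly smaller
`g`-value than every `v ∉ S`; consequently `S` is exactly the set of `|S|` elements
with the smallest `g`-values (any other set of the same cardinality has strictly
larger total `g`-value). -/
theorem rank_stability_multiplicative_gap {V : Type*} [Fintype V] [DecidableEq V]
    (κ : ℝ) (hκ : 1 ≤ κ) (f g : V → ℝ)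
    (hg0 : ∀ v, 0 ≤ g v) (hgf : ∀ v, g v ≤ f v) (hfκ : ∀ v, f v ≤ κ * g v)
    (S : Finset V) (hS : S.Nonempty)
    (dk : ℝ) (hdk : dk = S.sup' hS f)
    (hgap : ∀ v ∉ S, f v > κ * dk) :
    (∀ s ∈ S, ∀ v ∉ S, g s < g v) ∧
      (∀ T : Finset V, T.card = S.card → T ≠ S → ∑ s ∈ S, g s < ∑ t ∈ T, g t) := by
  have hκ0 : (0:ℝ) < κ := lt_of_lt_of_le one_pos hκ
  have key : ∀ s ∈ S, ∀ v ∉ S, g s < g v := by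
    intro s hsS v hvS
    have hfs : f s ≤ dk := by
      rw [hdk]; exact Finset.le_sup' f hsS
    have h1 : κ * g s ≤ κ * dk :=
      mul_le_mul_of_nonneg_left (le_trans (hgf s) hfs) (le_of_lt hκ0)
    have h2 : κ * dk < κ * g v := lt_of_lt_of_le (hgap v hvS) (hfκ v)
    exact lt_of_mul_lt_mul_left (lt_of_le_of_lt h1 h2) (le_of_lt hκ0)
  refine ⟨key, ?_⟩
  intro T hTcard hTne
  have hSd : (S \ T).Nonempty := by
    rw [Finset.sdiff_nonempty]
    intro hsub
    exact hTne (Finset.eq_of_subset_of_card_le hsub hTcard.le).symm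
  have hTd : (T \ S).Nonempty := by
    rw [Finset.sdiff_nonempty]
    intro hsub
    exact hTne (Finset.eq_of_subset_of_card_le hsub hTcard.ge)
  have hcard : (S \ T).card = (T \ S).card := by
    have h1 := Finset.card_inter_add_card_sdiff S T
    have h2 := Finset.card_inter_add_card_sdiff T S
    rw [Finset.inter_comm] at h2
    omega
  obtain ⟨t₀, ht₀, hmin⟩ := (T \ S).exists_min_image g hTd
  have hlt : ∑ s ∈ S \ T, g s < ∑ t ∈ T \ S, g t := by
    have hA : ∑ s ∈ S \ T, g s < (S \ T).card • g t₀ := by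
      have := Finset.sum_lt_sum_of_nonempty hSd (f := g) (g := fun _ => g t₀)
        (fun s hs => key s (Finset.mem_sdiff.mp hs).1 t₀ (Finset.mem_sdiff.mp ht₀).2)
      simpa using this
    have hB : (T \ S).card • g t₀ ≤ ∑ t ∈ T \ S, g t :=
      Finset.card_nsmul_le_sum _ _ _ hmin
    calc ∑ s ∈ S \ T, g s < (S \ T).card • g t₀ := hA
      _ = (T \ S).card • g t₀ := by rw [hcard]
      _ ≤ ∑ t ∈ T \ S, g t := hB
  have eS : ∑ x ∈ S ∩ T, g x + ∑ x ∈ S \ T, g x = ∑ x ∈ S, g x :=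
    Finset.sum_inter_add_sum_sdiff S T g
  have eT : ∑ x ∈ S ∩ T, g x + ∑ x ∈ T \ S, g x = ∑ x ∈ T, g x := by
    rw [Finset.inter_comm]; exact Finset.sum_inter_add_sum_sdiff T S g
  linarith
end

section
/- Let d ≥ 2 be an integer, ε > 0, R ≥ 0, and N ≥ 1 a real number. If N · ∫₀^{ε/2} (sinh t)^{d−1} dt ≤ ∫₀^{R+ε/2} (sinh t)^{d−1} dt, then R ≥ (log N − d·log(2/ε) − log d)/(d−1) − ε/2. -/
open Real intervalIntegral

/-- Explicit form of Proposition 2 (radius needed for a `b`-ary hierarchy): if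
`N · ∫₀^{ε/2} (sinh t)^(d−1) dt ≤ ∫₀^{R+ε/2} (sinh t)^(d−1) dt`, then
`R ≥ (log N − d·log(2/ε) − log d)/(d−1) − ε/2`. -/
theorem radius_lower_bound_from_packing (d : ℕ) (hd : 2 ≤ d) (ε : ℝ) (hε : 0 < ε)
    (R : ℝ) (hR : 0 ≤ R) (N : ℝ) (hN : 1 ≤ N)
    (hpack : N * ∫ t in (0 : ℝ)..(ε / 2), (Real.sinh t) ^ (d - 1) ≤
      ∫ t in (0 : ℝ)..(R + ε / 2), (Real.sinh t) ^ (d - 1)) :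
    (Real.log N - (d : ℝ) * Real.log (2 / ε) - Real.log d) / ((d : ℝ) - 1) - ε / 2 ≤
      R := by
  set n : ℕ := d - 1 with hn
  have hn1 : n + 1 = d := by omega
  have hdn : (n : ℝ) + 1 = d := by exact_mod_cast hn1
  have hc : (1 : ℝ) ≤ (n : ℝ) := by
    have h : 1 ≤ n := by omega
    exact_mod_cast h
  have hcpos : (0 : ℝ) < n := lt_of_lt_of_le one_pos hc
  set r : ℝ := R + ε / 2 with hr
  have hε2 : (0:ℝ) < ε / 2 := by linarith
  have hrpos : 0 < r := by simp only [hr]; linarith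
  -- lower bound on the small integral
  have h1 : (ε/2)^d / d ≤ ∫ t in (0:ℝ)..(ε/2), (Real.sinh t) ^ n := by
    have hmono : ∫ t in (0:ℝ)..(ε/2), t ^ n ≤ ∫ t in (0:ℝ)..(ε/2), (Real.sinh t) ^ n := by
      apply intervalIntegral.integral_mono_on (le_of_lt hε2)
      · exact (intervalIntegral.intervalIntegrable_pow n)
      · exact ((Real.continuous_sinh.pow n).intervalIntegrable _ _)
      · intro t ht
        exact pow_le_pow_left₀ ht.1 (Real.self_le_sinh_iff.mpr ht.1) n
    have hval : ∫ t in (0:ℝ)..(ε/2), t ^ n = (ε/2)^d / d := by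
      rw [integral_pow]
      rw [show n + 1 = d by omega]
      simp [hdn, zero_pow (by omega : d ≠ 0)]
    linarith [hmono, hval.symm.le]
  -- upper bound on the big integral
  have h2 : ∫ t in (0:ℝ)..r, (Real.sinh t) ^ n ≤ Real.exp ((n:ℝ) * r) := by
    have hmono : ∫ t in (0:ℝ)..r, (Real.sinh t) ^ n ≤ ∫ t in (0:ℝ)..r, Real.exp ((n:ℝ) * t) := by
      apply intervalIntegral.integral_mono_on hrpos.le
      · exact ((Real.continuous_sinh.pow n).intervalIntegrable _ _)
      · exact ((Real.continuous_exp.comp (continuous_const.mul continuous_id)).intervalIntegrable _ _)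
      · intro t ht
        have hs : Real.sinh t ≤ Real.exp t := by
          rw [Real.sinh_eq]
          nlinarith [Real.exp_pos (-t), Real.exp_pos t]
        calc (Real.sinh t)^n ≤ (Real.exp t)^n :=
              pow_le_pow_left₀ (Real.sinh_nonneg_iff.mpr ht.1) hs n
          _ = Real.exp ((n:ℝ) * t) := by rw [← Real.exp_nat_mul]
    have hval : ∫ t in (0:ℝ)..r, Real.exp ((n:ℝ) * t)
        = (Real.exp ((n:ℝ) * r) - 1) / n := by
      rw [intervalIntegral.integral_comp_mul_left (fun x => Real.exp x) (ne_of_gt hcpos)]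
      simp [integral_exp, mul_zero, smul_eq_mul, div_eq_inv_mul]
    rw [hval] at hmono
    have : (Real.exp ((n:ℝ) * r) - 1) / n ≤ Real.exp ((n:ℝ) * r) := by
      rw [div_le_iff₀ hcpos]
      nlinarith [Real.exp_pos ((n:ℝ)*r)]
    linarith
  -- combine
  have hkey : N * ((ε/2)^d / d) ≤ Real.exp ((n:ℝ) * r) := by
    calc N * ((ε/2)^d / d) ≤ N * ∫ t in (0:ℝ)..(ε/2), (Real.sinh t) ^ n :=
          mul_le_mul_of_nonneg_left h1 (by linarith)
      _ ≤ ∫ t in (0:ℝ)..r, (Real.sinh t) ^ n := hpack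
      _ ≤ Real.exp ((n:ℝ) * r) := h2
  have hdpos : (0:ℝ) < d := by positivity
  have hxpos : 0 < N * ((ε/2)^d / d) := by positivity
  have hlog : Real.log (N * ((ε/2)^d / d)) ≤ (n:ℝ) * r :=
    (Real.log_le_iff_le_exp hxpos).mpr hkey
  have hexpand : Real.log (N * ((ε/2)^d / d))
      = Real.log N - (d:ℝ) * Real.log (2/ε) - Real.log d := by
    rw [Real.log_mul (by linarith) (by positivity), Real.log_div (by positivity) (ne_of_gt hdpos),
      Real.log_pow]
    have : Real.log (ε/2) = - Real.log (2/ε) := by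
      rw [← Real.log_inv]; congr 1; field_simp
    rw [this]; ring
  rw [hexpand] at hlog
  have hnd : (n:ℝ) = (d:ℝ) - 1 := by linarith [hdn]
  rw [hnd] at hlog
  have hd1 : (0:ℝ) < (d:ℝ) - 1 := by linarith [hc, hnd]
  have hfin : (Real.log N - (d:ℝ) * Real.log (2/ε) - Real.log d) / ((d:ℝ)-1) ≤ r :=
    (div_le_iff₀ hd1).mpr (by linarith [hlog])
  have : r = R + ε/2 := hr
  linarith [hfin]
end
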